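/- arXiv:1609.05418 — 2 statements merged into one kernel-verified Lean document; each statement's English description precedes it below -/
import Mathlib

section
/- There exists a constant C > 0 such that for all t > 0, a > 0 and b ∈ ℝ, |∫_0^∞ e^{i η² t − a η − i η b} dη| ≤ C/√t. -/
/-!
The integrand is `e^{-aη}` times the chirp `e^{i(tη² - bη)}`. Completing the square and rescaling
turns every partial integral of the chirp into `t^{-1/2}` times a partial integral of `e^{iv²}`,
and those are bounded uniformly (integrate by parts against `1/(2v)` away from the origin).
Since `e^{-aη}` is positive and decreasing, an integration by parts against the primitive of the
chirp (the integral form of Abel summation) bounds the weighted partial integrals by the same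
constant, and the improper integral is their limit.
-/

open Complex MeasureTheory intervalIntegral Set

theorem norm_integral_smul_le_of_deriv_nonpos {E : Type*} [NormedAddCommGroup E]
    [NormedSpace ℝ E] [CompleteSpace E] {f : ℝ → E} {ψ ψ' : ℝ → ℝ} {p q S : ℝ} (hpq : p ≤ q)
    (hf : Continuous f) (hψ : ∀ x ∈ uIcc p q, HasDerivAt ψ (ψ' x) x)
    (hψ'int : IntervalIntegrable ψ' volume p q) (hψ'_nonpos : ∀ x ∈ Icc p q, ψ' x ≤ 0)
    (hψq : 0 ≤ ψ q) (hS : ∀ x ∈ Icc p q, ‖∫ u in p..x, f u‖ ≤ S) :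
    ‖∫ u in p..q, ψ u • f u‖ ≤ S * ψ p := by
  set G : ℝ → E := fun x => ∫ u in p..x, f u
  have hG : ∀ x ∈ uIcc p q, HasDerivAt G (f x) x := fun x _ =>
    (hf.integral_hasStrictDerivAt p x).hasDerivAt
  have hparts : ∫ u in p..q, ψ u • f u = ψ q • G q - ∫ u in p..q, ψ' u • G u := by
    rw [integral_smul_deriv_eq_deriv_smul hψ hG hψ'int (hf.intervalIntegrable p q)]
    simp [G]
  have hrest : ‖∫ u in p..q, ψ' u • G u‖ ≤ S * (ψ p - ψ q) :=
    calc ‖∫ u in p..q, ψ' u • G u‖ ≤ ∫ u in p..q, -ψ' u * S := by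
          refine norm_integral_le_of_norm_le hpq (.of_forall fun x hx => ?_)
            (hψ'int.neg.mul_const S)
          have hx' := Ioc_subset_Icc_self hx
          rw [norm_smul, Real.norm_eq_abs, abs_of_nonpos (hψ'_nonpos x hx')]
          exact mul_le_mul_of_nonneg_left (hS x hx') (neg_nonneg.2 (hψ'_nonpos x hx'))
      _ = S * (ψ p - ψ q) := by
          rw [intervalIntegral.integral_mul_const, intervalIntegral.integral_neg,
            integral_eq_sub_of_hasDerivAt hψ hψ'int]
          ring
  calc ‖∫ u in p..q, ψ u • f u‖ ≤ ψ q * S + S * (ψ p - ψ q) := by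
        rw [hparts]
        refine (norm_sub_le _ _).trans (add_le_add ?_ hrest)
        rw [norm_smul, Real.norm_eq_abs, abs_of_nonneg hψq]
        exact mul_le_mul_of_nonneg_left (hS q ⟨hpq, le_rfl⟩) hψq
    _ = S * ψ p := by ring

theorem norm_cexp_I_mul_sq (x : ℝ) : ‖cexp (I * x ^ 2)‖ = 1 := by
  rw [← ofReal_pow]
  exact norm_exp_I_mul_ofReal _

theorem hasDerivAt_neg_I_mul_cexp_I_mul_sq (x : ℝ) :
    HasDerivAt (fun v : ℝ => -I * cexp (I * v ^ 2)) ((2 * x) • cexp (I * x ^ 2)) x := by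
  convert (((hasDerivAt_pow 2 (x : ℂ)).const_mul I).cexp.const_mul (-I)).comp_ofReal using 1
  rw [real_smul]
  push_cast
  ring_nf
  rw [I_sq]
  ring

theorem norm_integral_cexp_I_mul_sq_le_inv {p q : ℝ} (hp : 0 < p) (hpq : p ≤ q) :
    ‖∫ v in p..q, cexp (I * v ^ 2)‖ ≤ p⁻¹ := by
  have hpos : ∀ x ∈ uIcc p q, 0 < x := fun x hx => hp.trans_le (uIcc_of_le hpq ▸ hx).1
  have hprimitive : ∀ x ∈ Icc p q, ‖∫ v in p..x, (2 * v) • cexp (I * v ^ 2)‖ ≤ 2 := by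
    intro x _
    rw [integral_eq_sub_of_hasDerivAt (fun v _ => hasDerivAt_neg_I_mul_cexp_I_mul_sq v)
      (Continuous.intervalIntegrable (by fun_prop) _ _)]
    refine (norm_sub_le _ _).trans_eq ?_
    simp only [norm_mul, norm_neg, norm_I, one_mul, norm_cexp_I_mul_sq]
    norm_num
  have key := norm_integral_smul_le_of_deriv_nonpos (ψ := fun v => 2⁻¹ * v⁻¹)
    (ψ' := fun v => 2⁻¹ * -(v ^ 2)⁻¹) hpq (by fun_prop)
    (fun x hx => (hasDerivAt_inv (hpos x hx).ne').const_mul 2⁻¹)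
    (continuousOn_const.mul ((continuousOn_pow 2).inv₀
      fun x hx => pow_ne_zero 2 (hpos x hx).ne').neg).intervalIntegrable
    (fun x _ => mul_nonpos_of_nonneg_of_nonpos (by norm_num) (neg_nonpos.2 (by positivity)))
    (by have := hp.trans_le hpq; positivity) hprimitive
  have hintegrand : EqOn (fun v : ℝ => (2⁻¹ * v⁻¹) • (2 * v) • cexp (I * v ^ 2))
      (fun v : ℝ => cexp (I * v ^ 2)) (uIcc p q) := fun v hv => by
    have := (hpos v hv).ne'
    simp only [smul_smul]
    rw [show 2⁻¹ * v⁻¹ * (2 * v) = (1 : ℝ) by field_simp, one_smul]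
  rw [integral_congr hintegrand] at key
  linarith

theorem norm_integral_zero_cexp_I_mul_sq_le_two (x : ℝ) :
    ‖∫ v in 0..x, cexp (I * v ^ 2)‖ ≤ 2 := by
  have hint : ∀ a b : ℝ, IntervalIntegrable (fun v : ℝ => cexp (I * v ^ 2)) volume a b :=
    fun a b => Continuous.intervalIntegrable (by fun_prop) a b
  have hlength : ∀ y, ‖∫ v in 0..y, cexp (I * v ^ 2)‖ ≤ |y| := fun y => by
    simpa using norm_integral_le_of_norm_le_const (a := 0) (b := y) (C := 1)
      fun v _ => (norm_cexp_I_mul_sq v).le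
  have hnonneg : ∀ y, 0 ≤ y → ‖∫ v in 0..y, cexp (I * v ^ 2)‖ ≤ 2 := by
    intro y hy
    rcases le_total y 1 with hy1 | hy1
    · linarith [hlength y, abs_of_nonneg hy]
    · rw [← integral_add_adjacent_intervals (hint 0 1) (hint 1 y)]
      refine (norm_add_le _ _).trans ?_
      have h1 := norm_integral_cexp_I_mul_sq_le_inv one_pos hy1
      have h0 := hlength 1
      norm_num at h0 h1
      linarith
  rcases le_total 0 x with hx | hx
  · exact hnonneg x hx
  · have hreflect : ∫ v in 0..x, cexp (I * v ^ 2) = -∫ v in 0..-x, cexp (I * v ^ 2) := by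
      have := integral_comp_neg (a := 0) (b := -x) fun v : ℝ => cexp (I * v ^ 2)
      simp only [neg_neg, neg_zero, ofReal_neg, even_two.neg_pow] at this
      rw [this, integral_symm]
    rw [hreflect, norm_neg]
    exact hnonneg (-x) (neg_nonneg.2 hx)

theorem norm_integral_cexp_I_mul_sq_le_four (p q : ℝ) :
    ‖∫ v in p..q, cexp (I * v ^ 2)‖ ≤ 4 := by
  rw [← integral_interval_sub_left (a := 0) (Continuous.intervalIntegrable (by fun_prop) _ _)
    (Continuous.intervalIntegrable (by fun_prop) _ _)]
  refine (norm_sub_le _ _).trans ?_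
  linarith [norm_integral_zero_cexp_I_mul_sq_le_two q, norm_integral_zero_cexp_I_mul_sq_le_two p]

theorem norm_integral_cexp_I_mul_quadratic_le {t : ℝ} (ht : 0 < t) (b p q : ℝ) :
    ‖∫ u in p..q, cexp (I * (t * u ^ 2 - b * u))‖ ≤ 4 / √t := by
  set s := √t
  have hs : 0 < s := Real.sqrt_pos.2 ht
  have hss : (s : ℂ) ^ 2 = t := by rw [← ofReal_pow, Real.sq_sqrt ht.le]
  have hsquare : ∀ u : ℝ, cexp (I * (t * u ^ 2 - b * u)) =
      cexp (I * ((-(b ^ 2 / (4 * t)) : ℝ) : ℂ)) * cexp (I * ((s * u - b / (2 * s) : ℝ) : ℂ) ^ 2) := by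
    intro u
    have : (s : ℂ) ≠ 0 := ofReal_ne_zero.2 hs.ne'
    rw [← Complex.exp_add]
    congr 1
    push_cast
    rw [← hss]
    field_simp
    ring
  simp_rw [hsquare]
  rw [intervalIntegral.integral_const_mul,
    integral_comp_mul_sub (fun v : ℝ => cexp (I * (v : ℂ) ^ 2)) hs.ne', norm_mul, norm_smul,
    norm_exp_I_mul_ofReal, one_mul, Real.norm_of_nonneg (inv_nonneg.2 hs.le), inv_mul_eq_div]
  exact div_le_div_of_nonneg_right (norm_integral_cexp_I_mul_sq_le_four _ _) hs.le

/-- There is `C > 0` such that for all `t > 0`, `a > 0`, `b ∈ ℝ`,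
`|∫_0^∞ e^{iη²t − aη − iηb} dη| ≤ C/√t`. -/
theorem stmt1 :
    ∃ C : ℝ, 0 < C ∧ ∀ t a b : ℝ, 0 < t → 0 < a →
      ‖∫ η in Set.Ioi (0 : ℝ),
          Complex.exp (Complex.I * (η : ℂ) ^ 2 * (t : ℂ) - (a : ℂ) * (η : ℂ)
            - Complex.I * (η : ℂ) * (b : ℂ))‖ ≤ C / Real.sqrt t := by
  refine ⟨4, by norm_num, fun t a b ht ha => ?_⟩
  have hfactor : ∀ η : ℝ, cexp (I * η ^ 2 * t - a * η - I * η * b) =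
      Real.exp (-a * η) • cexp (I * (t * η ^ 2 - b * η)) := by
    intro η
    rw [real_smul, ofReal_exp, ← Complex.exp_add]
    push_cast
    ring_nf
  simp_rw [hfactor]
  have hint : IntegrableOn
      (fun η : ℝ => Real.exp (-a * η) • cexp (I * (t * η ^ 2 - b * η))) (Ioi 0) := by
    refine (exp_neg_integrableOn_Ioi 0 ha).mono' (by fun_prop) (.of_forall fun η => ?_)
    rw [norm_smul, Real.norm_of_nonneg (Real.exp_pos _).le, norm_exp]
    simp [← ofReal_pow]
  have hpartial : ∀ q, 0 ≤ q →
      ‖∫ η in 0..q, Real.exp (-a * η) • cexp (I * (t * η ^ 2 - b * η))‖ ≤ 4 / √t := fun q hq => by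
    simpa using norm_integral_smul_le_of_deriv_nonpos (ψ := fun η => Real.exp (-a * η))
      (ψ' := fun η => -a * Real.exp (-a * η)) hq (by fun_prop)
      (fun x _ => by convert ((hasDerivAt_id' x).const_mul (-a)).exp using 1; ring)
      (Continuous.intervalIntegrable (by fun_prop) _ _)
      (fun x _ => by have := Real.exp_pos (-a * x); nlinarith) (Real.exp_pos _).le
      (fun x _ => norm_integral_cexp_I_mul_quadratic_le ht b 0 x)
  exact le_of_tendsto (intervalIntegral_tendsto_integral_Ioi 0 hint Filter.tendsto_id).norm
    (Filter.eventually_atTop.2 ⟨0, hpartial⟩)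
end

section
/- Let u: Ω → ℂ be a smooth solution of i u_t + u_{xx} + u_{yy} + λ|u|^{p−2}u = 0 on an open set Ω ⊆ ℝ³, with λ real and p > 2. Then wherever u ≠ 0, (|u_y|² − |u_x|² + (2λ/p)|u|^p)_y = −2 Re(ū_x u_y)_x − i(u ū_y)_t + i(u ū_t)_y. -/
open Complex

section Aux
variable {E : Type*} [NormedAddCommGroup E] [NormedSpace ℝ E]

lemma aux_conj {f : E → ℂ} {f' : E →L[ℝ] ℂ} {z : E} (hf : HasFDerivAt f f' z) :
    HasFDerivAt (fun w => (starRingEnd ℂ) (f w))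
      (((Complex.conjCLE : ℂ ≃L[ℝ] ℂ) : ℂ →L[ℝ] ℂ).comp f') z := by
  have h := ((Complex.conjCLE : ℂ ≃L[ℝ] ℂ) : ℂ →L[ℝ] ℂ).hasFDerivAt.comp z hf
  exact h.congr_of_eventuallyEq (Filter.Eventually.of_forall fun w => by simp)

lemma aux_normSq {f : E → ℂ} {f' : E →L[ℝ] ℂ} {z : E} (hf : HasFDerivAt f f' z) :
    HasFDerivAt (fun w => ‖f w‖ ^ 2)
      ((2 * (f z).re) • (Complex.reCLM.comp f') + (2 * (f z).im) • (Complex.imCLM.comp f')) z := by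
  have h1 : HasFDerivAt (fun w => (f w).re) (Complex.reCLM.comp f') z :=
    (Complex.reCLM.hasFDerivAt).comp z hf
  have h2 : HasFDerivAt (fun w => (f w).im) (Complex.imCLM.comp f') z :=
    (Complex.imCLM.hasFDerivAt).comp z hf
  have h := (h1.mul h1).add (h2.mul h2)
  have heq : (fun w => ‖f w‖ ^ 2) = fun w => (f w).re * (f w).re + (f w).im * (f w).im := by
    funext w
    rw [Complex.sq_norm, Complex.normSq_apply]
  rw [heq]
  simp only [Pi.add_def, Pi.mul_def] at h
  refine h.congr_fderiv ?_
  ext v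
  simp
  ring

lemma aux_rpow {f : E → ℂ} {f' : E →L[ℝ] ℂ} {z : E} (hf : HasFDerivAt f f' z)
    (h0 : f z ≠ 0) (p : ℝ) :
    HasFDerivAt (fun w => ‖f w‖ ^ p)
      (((p / 2) * (‖f z‖ ^ 2 : ℝ) ^ (p / 2 - 1)) •
        ((2 * (f z).re) • (Complex.reCLM.comp f') + (2 * (f z).im) • (Complex.imCLM.comp f'))) z := by
  have hg := aux_normSq hf
  have hx : (‖f z‖ ^ 2 : ℝ) ≠ 0 := pow_ne_zero _ (norm_ne_zero_iff.mpr h0)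
  have hr : HasDerivAt (fun x : ℝ => x ^ (p / 2))
      ((p / 2) * (‖f z‖ ^ 2 : ℝ) ^ (p / 2 - 1)) (‖f z‖ ^ 2) :=
    Real.hasDerivAt_rpow_const (Or.inl hx)
  have h := hr.comp_hasFDerivAt z hg
  refine h.congr_of_eventuallyEq (Filter.Eventually.of_forall fun w => ?_)
  show ‖f w‖ ^ p = (‖f w‖ ^ 2 : ℝ) ^ (p / 2)
  rw [← Real.rpow_natCast ‖f w‖ 2, ← Real.rpow_mul (norm_nonneg _)]
  congr 1
  ring

end Aux

/-- Momentum-flux identity: if `u` is a smooth solution of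
`i u_t + u_xx + u_yy + λ|u|^{p−2}u = 0` on an open `Ω ⊆ ℝ³`, then wherever `u ≠ 0`,
`(|u_y|² − |u_x|² + (2λ/p)|u|^p)_y = −2 Re(ū_x u_y)_x − i(u ū_y)_t + i(u ū_t)_y`. -/
theorem stmt10 (Ω : Set (ℝ × ℝ × ℝ)) (hΩ : IsOpen Ω) (u : ℝ × ℝ × ℝ → ℂ)
    (hu : ContDiffOn ℝ (⊤ : ℕ∞) u Ω) (lam p : ℝ) (hp : 2 < p)
    (heq : ∀ z ∈ Ω,
      Complex.I * fderiv ℝ u z (0, 0, 1) +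
        fderiv ℝ (fun w => fderiv ℝ u w (1, 0, 0)) z (1, 0, 0) +
        fderiv ℝ (fun w => fderiv ℝ u w (0, 1, 0)) z (0, 1, 0) +
        (lam : ℂ) * ((‖u z‖ ^ (p - 2) : ℝ) : ℂ) * u z = 0) :
    ∀ z ∈ Ω, u z ≠ 0 →
      ((fderiv ℝ (fun w => ‖fderiv ℝ u w (0, 1, 0)‖ ^ 2 - ‖fderiv ℝ u w (1, 0, 0)‖ ^ 2
          + (2 * lam / p) * ‖u w‖ ^ p) z (0, 1, 0) : ℝ) : ℂ) =
        -2 * ((fderiv ℝ (fun w => (starRingEnd ℂ) (fderiv ℝ u w (1, 0, 0)) * fderiv ℝ u w (0, 1, 0))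
                z (1, 0, 0)).re : ℂ)
        - Complex.I * fderiv ℝ (fun w => u w * (starRingEnd ℂ) (fderiv ℝ u w (0, 1, 0))) z (0, 0, 1)
        + Complex.I * fderiv ℝ (fun w => u w * (starRingEnd ℂ) (fderiv ℝ u w (0, 0, 1))) z (0, 1, 0) := by
  intro z hz hz0
  have hcd : ContDiffAt ℝ (⊤ : ℕ∞) u z := hu.contDiffAt (hΩ.mem_nhds hz)
  have hu1 : DifferentiableAt ℝ u z := hcd.differentiableAt (by simp)
  have hD2d : DifferentiableAt ℝ (fderiv ℝ u) z :=
    (hcd.fderiv_right (m := 1) (by norm_cast)).differentiableAt (by norm_num)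
  set D2 := fderiv ℝ (fderiv ℝ u) z with hD2def
  have has2 : ∀ a : ℝ × ℝ × ℝ, HasFDerivAt (fun w => fderiv ℝ u w a)
      ((ContinuousLinearMap.apply ℝ ℂ a).comp D2) z := fun a =>
    (ContinuousLinearMap.apply ℝ ℂ a).hasFDerivAt.comp z hD2d.hasFDerivAt
  have hsymm : ∀ v w, D2 v w = D2 w v := hcd.isSymmSndFDerivAt (by simp; norm_cast)
  have hax := has2 (1, 0, 0)
  have hay := has2 (0, 1, 0)
  have hat := has2 (0, 0, 1)
  have H1 := aux_normSq hay
  have H2 := aux_normSq hax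
  have H3 := aux_rpow hu1.hasFDerivAt hz0 p
  have HL := (H1.sub H2).add (H3.const_mul (2 * lam / p))
  have HR1 := (aux_conj hax).mul hay
  have HR2 := hu1.hasFDerivAt.mul (aux_conj hay)
  have HR3 := hu1.hasFDerivAt.mul (aux_conj hat)
  simp only [Pi.add_def, Pi.sub_def, Pi.mul_def] at HL HR1 HR2 HR3
  rw [HL.fderiv, HR1.fderiv, HR2.fderiv, HR3.fderiv]
  -- rewrite the PDE's second derivatives
  have hpde := heq z hz
  rw [hax.fderiv, hay.fderiv] at hpde
  simp only [ContinuousLinearMap.add_apply, ContinuousLinearMap.smul_apply,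
    ContinuousLinearMap.comp_apply, ContinuousLinearMap.apply_apply,
    Complex.reCLM_apply, Complex.imCLM_apply, ContinuousLinearEquiv.coe_coe,
    Complex.conjCLE_apply, smul_eq_mul, ContinuousLinearMap.sub_apply] at hpde ⊢
  have hp0 : p ≠ 0 := by linarith
  have hcc : ((‖u z‖ ^ 2 : ℝ) ^ (p / 2 - 1) : ℝ) = ‖u z‖ ^ (p - 2) := by
    rw [← Real.rpow_natCast ‖u z‖ 2, ← Real.rpow_mul (norm_nonneg _)]
    congr 1; ring
  rw [hcc]
  have hB : D2 (0, 1, 0) (0, 1, 0) =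
      -(Complex.I * fderiv ℝ u z (0, 0, 1)) - D2 (1, 0, 0) (1, 0, 0)
        - (lam : ℂ) * ((‖u z‖ ^ (p - 2) : ℝ) : ℂ) * u z := by
    linear_combination hpde
  rw [hB, hsymm (0, 1, 0) (1, 0, 0), hsymm (0, 0, 1) (0, 1, 0)]
  rw [Complex.ext_iff]
  constructor <;>
  · simp only [Complex.ofReal_re, Complex.ofReal_im, Complex.add_re, Complex.add_im,
      Complex.sub_re, Complex.sub_im, Complex.neg_re, Complex.neg_im, Complex.mul_re,
      Complex.mul_im, Complex.I_re, Complex.I_im, Complex.conj_re, Complex.conj_im,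
      Complex.re_ofNat, Complex.im_ofNat, Complex.one_re, Complex.one_im,
      Complex.ofReal_mul, Complex.ofReal_pow]
    field_simp
    ring
end
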